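/- Let Σ̂ be a real symmetric positive definite matrix partitioned in blocks as Σ̂ = [[Â, B̂], [B̂ᵀ, D̂]], let γ ∈ [0,1], and set M = B̂ D̂^{-1} B̂ᵀ. If λ_min(Â) − γ·‖B̂‖²/λ_min(D̂) > 0, where ‖B̂‖ is the operator norm (largest singular value) of B̂, then Â − γM is symmetric positive definite and its condition number satisfies κ(Â − γM) ≤ λ_max(Â) / (λ_min(Â) − γ·‖B̂‖²/λ_min(D̂)). -/

import Mathlib

open Matrix

/-- The operator norm of a real matrix induced by the Euclidean norm
(largest singular value). -/
noncomputable def euclideanOpNorm {m n : ℕ} (M : Matrix (Fin m) (Fin n) ℝ) : ℝ :=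
  ‖LinearMap.toContinuousLinearMap (Matrix.toEuclideanLin M)‖

section Aux

private lemma dot_self_nonneg {k : ℕ} (v : Fin k → ℝ) : 0 ≤ v ⬝ᵥ v :=
  Finset.sum_nonneg fun i _ => mul_self_nonneg (v i)

/-- Spectral decomposition of the quadratic form. -/
private lemma quad_eq_sum {k : ℕ} {H : Matrix (Fin k) (Fin k) ℝ} (hH : H.IsHermitian)
    (x : Fin k → ℝ) :
    ∃ y : Fin k → ℝ, x ⬝ᵥ x = y ⬝ᵥ y ∧
      x ⬝ᵥ H *ᵥ x = ∑ i, hH.eigenvalues i * (y i) ^ 2 := by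
  classical
  set U : Matrix (Fin k) (Fin k) ℝ := (hH.eigenvectorUnitary : Matrix (Fin k) (Fin k) ℝ) with hU
  have hstar : star U = Uᵀ := by
    rw [Matrix.star_eq_conjTranspose, Matrix.conjTranspose_eq_transpose_of_trivial]
  have hUU : U * Uᵀ = 1 := by
    have := (Matrix.mem_unitaryGroup_iff).mp hH.eigenvectorUnitary.2
    rwa [hstar] at this
  refine ⟨Uᵀ *ᵥ x, ?_, ?_⟩
  · calc x ⬝ᵥ x = x ⬝ᵥ ((U * Uᵀ) *ᵥ x) := by rw [hUU, Matrix.one_mulVec]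
    _ = x ⬝ᵥ (U *ᵥ (Uᵀ *ᵥ x)) := by rw [Matrix.mulVec_mulVec]
    _ = (x ᵥ* U) ⬝ᵥ (Uᵀ *ᵥ x) := by rw [Matrix.dotProduct_mulVec]
    _ = (Uᵀ *ᵥ x) ⬝ᵥ (Uᵀ *ᵥ x) := by rw [Matrix.mulVec_transpose]
  · have hs := hH.spectral_theorem
    rw [Unitary.conjStarAlgAut_apply, ← hU, hstar] at hs
    calc x ⬝ᵥ H *ᵥ x
        = x ⬝ᵥ ((U * Matrix.diagonal (RCLike.ofReal ∘ hH.eigenvalues) * Uᵀ) *ᵥ x) := by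
          rw [← hs]
      _ = (x ᵥ* U) ⬝ᵥ ((Matrix.diagonal (RCLike.ofReal ∘ hH.eigenvalues)) *ᵥ (Uᵀ *ᵥ x)) := by
          rw [← Matrix.mulVec_mulVec, ← Matrix.mulVec_mulVec, Matrix.dotProduct_mulVec]
      _ = ∑ i, hH.eigenvalues i * ((Uᵀ *ᵥ x) i) ^ 2 := by
          rw [← Matrix.mulVec_transpose]
          simp only [dotProduct, Matrix.mulVec_diagonal]
          refine Finset.sum_congr rfl fun i _ => ?_
          simp [RCLike.ofReal]
          ring

private lemma quad_le_sup {k : ℕ} {H : Matrix (Fin k) (Fin k) ℝ} (hH : H.IsHermitian)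
    (x : Fin k → ℝ) :
    x ⬝ᵥ H *ᵥ x ≤ (⨆ i, hH.eigenvalues i) * (x ⬝ᵥ x) := by
  obtain ⟨y, hxy, hq⟩ := quad_eq_sum hH x
  rw [hq, hxy]
  calc ∑ i, hH.eigenvalues i * (y i) ^ 2
      ≤ ∑ i, (⨆ i, hH.eigenvalues i) * (y i) ^ 2 :=
        Finset.sum_le_sum fun i _ =>
          mul_le_mul_of_nonneg_right (le_ciSup (Set.Finite.bddAbove (Set.finite_range _)) i)
            (sq_nonneg _)
    _ = (⨆ i, hH.eigenvalues i) * (y ⬝ᵥ y) := by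
        rw [← Finset.mul_sum]; congr 1
        simp [dotProduct, sq]

private lemma inf_le_quad {k : ℕ} {H : Matrix (Fin k) (Fin k) ℝ} (hH : H.IsHermitian)
    (x : Fin k → ℝ) :
    (⨅ i, hH.eigenvalues i) * (x ⬝ᵥ x) ≤ x ⬝ᵥ H *ᵥ x := by
  obtain ⟨y, hxy, hq⟩ := quad_eq_sum hH x
  rw [hq, hxy]
  calc (⨅ i, hH.eigenvalues i) * (y ⬝ᵥ y)
      = ∑ i, (⨅ i, hH.eigenvalues i) * (y i) ^ 2 := by
        rw [← Finset.mul_sum]; congr 1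
        simp [dotProduct, sq]
    _ ≤ ∑ i, hH.eigenvalues i * (y i) ^ 2 :=
        Finset.sum_le_sum fun i _ =>
          mul_le_mul_of_nonneg_right (ciInf_le (Set.Finite.bddBelow (Set.finite_range _)) i)
            (sq_nonneg _)

/-- each eigenvalue is a Rayleigh quotient value on a unit vector -/
private lemma eig_rayleigh {k : ℕ} {H : Matrix (Fin k) (Fin k) ℝ} (hH : H.IsHermitian)
    (i : Fin k) :
    ∃ v : Fin k → ℝ, v ⬝ᵥ v = 1 ∧ v ⬝ᵥ H *ᵥ v = hH.eigenvalues i := by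
  have hvv : (⇑(hH.eigenvectorBasis i) : Fin k → ℝ) ⬝ᵥ ⇑(hH.eigenvectorBasis i) = 1 := by
    have h2 : (inner ℝ (hH.eigenvectorBasis i) (hH.eigenvectorBasis i) : ℝ) = 1 := by
      rw [real_inner_self_eq_norm_sq, hH.eigenvectorBasis.orthonormal.1 i]; norm_num
    rw [EuclideanSpace.inner_eq_star_dotProduct] at h2
    simpa using h2
  refine ⟨_, hvv, ?_⟩
  rw [hH.mulVec_eigenvectorBasis, dotProduct_smul, hvv]
  simp

/-- norm bound: ‖C x‖² ≤ ‖C‖² ‖x‖² in dot-product form. -/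
private lemma mulVec_dot_le {p q : ℕ} (C : Matrix (Fin p) (Fin q) ℝ) (x : Fin q → ℝ) :
    (C *ᵥ x) ⬝ᵥ (C *ᵥ x) ≤ euclideanOpNorm C ^ 2 * (x ⬝ᵥ x) := by
  have key : ∀ {r : ℕ} (v : Fin r → ℝ),
      v ⬝ᵥ v = ‖(WithLp.equiv 2 (Fin r → ℝ)).symm v‖ ^ 2 := by
    intro r v
    rw [← real_inner_self_eq_norm_sq, EuclideanSpace.inner_eq_star_dotProduct]
    simp
  have h1 : (C *ᵥ x) ⬝ᵥ (C *ᵥ x)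
      = ‖LinearMap.toContinuousLinearMap (Matrix.toEuclideanLin C)
          ((WithLp.equiv 2 (Fin q → ℝ)).symm x)‖ ^ 2 := by
    rw [key (C *ᵥ x)]
    rfl
  rw [h1, key x]
  have h2 := (LinearMap.toContinuousLinearMap (Matrix.toEuclideanLin C)).le_opNorm
    ((WithLp.equiv 2 (Fin q → ℝ)).symm x)
  have h3 : (0:ℝ) ≤ ‖LinearMap.toContinuousLinearMap (Matrix.toEuclideanLin C)
      ((WithLp.equiv 2 (Fin q → ℝ)).symm x)‖ := norm_nonneg _
  unfold euclideanOpNorm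
  nlinarith [h2, h3, norm_nonneg ((WithLp.equiv 2 (Fin q → ℝ)).symm x),
    ContinuousLinearMap.opNorm_nonneg (LinearMap.toContinuousLinearMap (Matrix.toEuclideanLin C))]

private lemma opNorm_transpose {p q : ℕ} (C : Matrix (Fin p) (Fin q) ℝ) :
    euclideanOpNorm Cᵀ = euclideanOpNorm C := by
  unfold euclideanOpNorm
  have h1 : Cᵀ = Cᴴ := (Matrix.conjTranspose_eq_transpose_of_trivial C).symm
  rw [h1, Matrix.toEuclideanLin_conjTranspose_eq_adjoint,
    LinearMap.adjoint_toContinuousLinearMap]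
  exact ContinuousLinearMap.adjoint.norm_map _

end Aux

/-- **conditioning of the sample augmented Schur block.**
Let `Σ̂ = [[Â, B̂], [B̂ᵀ, D̂]]` be a real SPD block matrix (so the diagonal blocks
`Â`, `D̂` are SPD), let `γ ∈ [0,1]`, and set `M = B̂ D̂⁻¹ B̂ᵀ`. If
`λ_min(Â) − γ·‖B̂‖²/λ_min(D̂) > 0`, where `‖B̂‖` is the operator norm of `B̂`, then
`Â − γM` is symmetric positive definite and its condition number satisfies
`κ(Â − γM) ≤ λ_max(Â) / (λ_min(Â) − γ·‖B̂‖²/λ_min(D̂))`. -/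
theorem augmented_schur_condition_bound {m n : ℕ}
    (A : Matrix (Fin m) (Fin m) ℝ) (B : Matrix (Fin m) (Fin n) ℝ)
    (D : Matrix (Fin n) (Fin n) ℝ)
    (hSig : (Matrix.fromBlocks A B Bᵀ D).PosDef)
    (hA : A.PosDef) (hD : D.PosDef)
    (γ : ℝ) (hγ0 : 0 ≤ γ) (hγ1 : γ ≤ 1)
    (M : Matrix (Fin m) (Fin m) ℝ) (hM : M = B * D⁻¹ * Bᵀ)
    (hpos : 0 < (⨅ i, hA.1.eigenvalues i) -
        γ * euclideanOpNorm B ^ 2 / (⨅ j, hD.1.eigenvalues j)) :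
    (A - γ • M).PosDef ∧
    ∀ h : (A - γ • M).IsHermitian,
      (⨆ i, h.eigenvalues i) / (⨅ i, h.eigenvalues i) ≤
        (⨆ i, hA.1.eigenvalues i) /
          ((⨅ i, hA.1.eigenvalues i) -
            γ * euclideanOpNorm B ^ 2 / (⨅ j, hD.1.eigenvalues j)) := by
  classical
  set lamA := ⨅ i, hA.1.eigenvalues i with hlamA
  set lamD := ⨅ j, hD.1.eigenvalues j with hlamD
  set e := euclideanOpNorm B with he
  set c := lamA - γ * e ^ 2 / lamD with hc
  have hMq : ∀ x : Fin m → ℝ, x ⬝ᵥ M *ᵥ x = (Bᵀ *ᵥ x) ⬝ᵥ (D⁻¹ *ᵥ (Bᵀ *ᵥ x)) := by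
    intro x
    rw [hM, ← Matrix.mulVec_mulVec, ← Matrix.mulVec_mulVec, Matrix.dotProduct_mulVec,
      ← Matrix.mulVec_transpose]
  have KEY0 : ∀ x : Fin m → ℝ, 0 ≤ x ⬝ᵥ M *ᵥ x := by
    intro x
    rw [hMq]
    rcases eq_or_ne (Bᵀ *ᵥ x) 0 with h0 | h0
    · simp [h0]
    · exact le_of_lt (by simpa using hD.inv.dotProduct_mulVec_pos h0)
  have KEY1 : ∀ x : Fin m → ℝ, γ * (x ⬝ᵥ M *ᵥ x) ≤ γ * e ^ 2 / lamD * (x ⬝ᵥ x) := by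
    intro x
    rcases Nat.eq_zero_or_pos n with hn | hn
    · have hM0 : x ⬝ᵥ M *ᵥ x = 0 := by
        rw [hMq]
        have h0 : (Bᵀ *ᵥ x) = 0 := by
          funext j; exact absurd (j.2.trans_le (le_of_eq hn)) (Nat.not_lt_zero _)
        simp [h0]
      have hlD : lamD = 0 := by
        have : IsEmpty (Fin n) := by rw [hn]; infer_instance
        rw [hlamD]
        exact Real.iInf_of_isEmpty _
      rw [hM0, hlD]
      simp
    · have hne : Nonempty (Fin n) := ⟨⟨0, hn⟩⟩
      have hlD : 0 < lamD := by
        rw [hlamD]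
        obtain ⟨j, hj⟩ := exists_eq_ciInf_of_finite (f := fun j => hD.1.eigenvalues j)
        rw [← hj]
        exact hD.eigenvalues_pos j
      set y := Bᵀ *ᵥ x with hy
      set z := D⁻¹ *ᵥ y with hz
      have hDz : D *ᵥ z = y := by
        rw [hz, Matrix.mulVec_mulVec,
          Matrix.mul_nonsing_inv _ ((Matrix.isUnit_iff_isUnit_det D).1 hD.isUnit),
          Matrix.one_mulVec]
      have h1 : lamD * (z ⬝ᵥ z) ≤ y ⬝ᵥ z := by
        have h1' := inf_le_quad hD.1 z
        rw [hDz, dotProduct_comm z y] at h1'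
        rw [hlamD]
        exact h1'
      have hCS : (y ⬝ᵥ z) ^ 2 ≤ (y ⬝ᵥ y) * (z ⬝ᵥ z) := by
        have hcs := Finset.sum_mul_sq_le_sq_mul_sq Finset.univ y z
        have e1 : (∑ i, y i ^ 2) = y ⬝ᵥ y := by simp [dotProduct, sq]
        have e2 : (∑ i, z i ^ 2) = z ⬝ᵥ z := by simp [dotProduct, sq]
        rw [e1, e2] at hcs
        exact hcs
      have hzz := dot_self_nonneg z
      have hyy := dot_self_nonneg y
      have hyz0 : 0 ≤ y ⬝ᵥ z := le_trans (mul_nonneg (le_of_lt hlD) hzz) h1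
      have ht : y ⬝ᵥ z ≤ (y ⬝ᵥ y) / lamD := by
        rw [le_div_iff₀ hlD]
        rcases eq_or_lt_of_le hyz0 with h | h
        · rw [← h]; simpa using hyy
        · nlinarith [hCS, h1, hzz, hyy, hlD, h]
      have hyB : y ⬝ᵥ y ≤ e ^ 2 * (x ⬝ᵥ x) := by
        rw [he, hy]
        have := mulVec_dot_le Bᵀ x
        rwa [opNorm_transpose] at this
      have hfin : x ⬝ᵥ M *ᵥ x ≤ e ^ 2 * (x ⬝ᵥ x) / lamD := by
        rw [hMq]
        calc (Bᵀ *ᵥ x) ⬝ᵥ (D⁻¹ *ᵥ (Bᵀ *ᵥ x)) = y ⬝ᵥ z := by rw [← hy, ← hz]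
          _ ≤ (y ⬝ᵥ y) / lamD := ht
          _ ≤ e ^ 2 * (x ⬝ᵥ x) / lamD := by gcongr

      calc γ * (x ⬝ᵥ M *ᵥ x) ≤ γ * (e ^ 2 * (x ⬝ᵥ x) / lamD) :=
            mul_le_mul_of_nonneg_left hfin hγ0
        _ = γ * e ^ 2 / lamD * (x ⬝ᵥ x) := by ring
  have hMH : M.IsHermitian := by
    rw [hM]
    show (B * D⁻¹ * Bᵀ)ᴴ = B * D⁻¹ * Bᵀ
    rw [Matrix.conjTranspose_mul, Matrix.conjTranspose_mul, hD.1.inv]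
    simp [Matrix.conjTranspose_eq_transpose_of_trivial, Matrix.mul_assoc]
  have hHerm : (A - γ • M).IsHermitian := by
    have hsm : (γ • M).IsHermitian := by
      show (γ • M)ᴴ = γ • M
      rw [Matrix.conjTranspose_smul, hMH]
      norm_num
    exact hA.1.sub hsm
  have hq : ∀ x : Fin m → ℝ, x ⬝ᵥ (A - γ • M) *ᵥ x = x ⬝ᵥ A *ᵥ x - γ * (x ⬝ᵥ M *ᵥ x) := by
    intro x
    rw [Matrix.sub_mulVec, dotProduct_sub]
    congr 1
    rw [Matrix.smul_mulVec, dotProduct_smul, smul_eq_mul]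
  have hlow : ∀ x : Fin m → ℝ, c * (x ⬝ᵥ x) ≤ x ⬝ᵥ (A - γ • M) *ᵥ x := by
    intro x
    rw [hq]
    have h1 : lamA * (x ⬝ᵥ x) ≤ x ⬝ᵥ A *ᵥ x := by rw [hlamA]; exact inf_le_quad hA.1 x
    have h2 := KEY1 x
    calc c * (x ⬝ᵥ x) = lamA * (x ⬝ᵥ x) - γ * e ^ 2 / lamD * (x ⬝ᵥ x) := by
          rw [hc]; ring
      _ ≤ x ⬝ᵥ A *ᵥ x - γ * (x ⬝ᵥ M *ᵥ x) := sub_le_sub h1 h2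
  have hupp : ∀ x : Fin m → ℝ,
      x ⬝ᵥ (A - γ • M) *ᵥ x ≤ (⨆ i, hA.1.eigenvalues i) * (x ⬝ᵥ x) := by
    intro x
    rw [hq]
    have h1 := quad_le_sup hA.1 x
    have h2 := mul_nonneg hγ0 (KEY0 x)
    calc x ⬝ᵥ A *ᵥ x - γ * (x ⬝ᵥ M *ᵥ x) ≤ x ⬝ᵥ A *ᵥ x - 0 := by
          exact sub_le_sub_left h2 _
      _ = x ⬝ᵥ A *ᵥ x := by ring
      _ ≤ (⨆ i, hA.1.eigenvalues i) * (x ⬝ᵥ x) := h1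
  have hcpos : 0 < c := hpos
  constructor
  · refine Matrix.PosDef.of_dotProduct_mulVec_pos hHerm fun x hx => ?_
    have hxx : 0 < x ⬝ᵥ x := by
      rcases eq_or_lt_of_le (dot_self_nonneg x) with h | h
      · exact absurd (dotProduct_self_eq_zero.mp h.symm) hx
      · exact h
    have : (0:ℝ) < x ⬝ᵥ (A - γ • M) *ᵥ x :=
      lt_of_lt_of_le (mul_pos hcpos hxx) (hlow x)
    simpa using this
  · intro h
    rcases Nat.eq_zero_or_pos m with hm | hm
    · have : IsEmpty (Fin m) := by rw [hm]; infer_instance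
      simp [Real.iSup_of_isEmpty, Real.iInf_of_isEmpty]
    · have hne : Nonempty (Fin m) := ⟨⟨0, hm⟩⟩
      have hub : ∀ i, h.eigenvalues i ≤ ⨆ i, hA.1.eigenvalues i := by
        intro i
        obtain ⟨v, hv1, hv2⟩ := eig_rayleigh h i
        rw [← hv2]
        have := hupp v
        rwa [hv1, mul_one] at this
      have hlb : ∀ i, c ≤ h.eigenvalues i := by
        intro i
        obtain ⟨v, hv1, hv2⟩ := eig_rayleigh h i
        rw [← hv2]
        have := hlow v
        rwa [hv1, mul_one] at this
      have hS : (0:ℝ) ≤ ⨆ i, hA.1.eigenvalues i :=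
        le_trans (le_of_lt hcpos)
          (le_trans (hlb (Classical.arbitrary _)) (hub (Classical.arbitrary _)))
      exact div_le_div₀ hS (ciSup_le hub) hcpos (le_ciInf hlb)
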